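/- arXiv:0911.1049 — 2 statements merged into one kernel-verified Lean document; each statement's English description precedes it below -/
import Mathlib

section
/- Let g_{ij} be a smooth symmetric covariant 2-tensor field on an open subset of ℝⁿ, Γ_{i;kl} = ½(g_{ik,l} + g_{il,k} − g_{kl,i}) the Christoffel symbols of the first kind, and dX^i smooth functions with ∂_k(dX^i) = 0 (constant). Define the connection Γ̃^s_{kl} = dX^i dX^s Γ_{i;kl}. Then the trace satisfies Γ̃^k_{ik} = ∂_i(log e) where e = exp(½ dX^k dX^s g_{ks}); i.e. Γ̃ is equiaffine. -/
/-- Partial derivative in the `i`-th coordinate direction. -/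
noncomputable def pd {n : ℕ} (i : Fin n) (f : (Fin n → ℝ) → ℝ) (x : Fin n → ℝ) : ℝ :=
  fderiv ℝ f x (Pi.single i 1)

/-- For constant `dX^i`, the connection `Γ̃^s_{kl} = dX^i dX^s Γ_{i;kl}` is equiaffine:
its trace `Γ̃^k_{ik}` equals `∂_i log e` with `e = exp(½ dX^k dX^s g_{ks})`. -/
theorem stmt5 {n : ℕ} (g : (Fin n → ℝ) → Fin n → Fin n → ℝ)
    (hg : ∀ i j, ContDiff ℝ (⊤ : ℕ∞) fun x => g x i j)
    (hsym : ∀ x i j, g x i j = g x j i)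
    (dX : Fin n → ℝ) (x : Fin n → ℝ) (i : Fin n) :
    (∑ k, ∑ m, dX m * dX k *
        ((pd k (fun y => g y m i) x + pd i (fun y => g y m k) x
          - pd m (fun y => g y i k) x) / 2))
      = pd i (fun y =>
          Real.log (Real.exp ((∑ a, ∑ b, dX a * dX b * g y a b) / 2))) x := by
  have hdiff : ∀ a b, DifferentiableAt ℝ (fun y => g y a b) x :=
    fun a b => ((hg a b).differentiable (by simp)).differentiableAt
  have hfun : (fun y => Real.log (Real.exp ((∑ a, ∑ b, dX a * dX b * g y a b) / 2)))
      = fun y => (2 : ℝ)⁻¹ * ∑ a, ∑ b, dX a * dX b * g y a b := by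
    funext y; rw [Real.log_exp, div_eq_inv_mul]
  rw [hfun]
  have hinner : ∀ a, DifferentiableAt ℝ (fun y => ∑ b, dX a * dX b * g y a b) x := by
    intro a
    exact DifferentiableAt.fun_sum (fun b _ => (hdiff a b).const_mul _)
  have hsumdiff : DifferentiableAt ℝ (fun y => ∑ a, ∑ b, dX a * dX b * g y a b) x :=
    DifferentiableAt.fun_sum (fun a _ => hinner a)
  -- Compute the RHS derivative
  have hR : pd i (fun y => (2 : ℝ)⁻¹ * ∑ a, ∑ b, dX a * dX b * g y a b) x
      = (2 : ℝ)⁻¹ * ∑ a, ∑ b, dX a * dX b * pd i (fun y => g y a b) x := by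
    unfold pd
    rw [fderiv_const_mul hsumdiff]
    rw [show (fun y => ∑ a, ∑ b, dX a * dX b * g y a b)
        = (fun y => ∑ a ∈ Finset.univ, (fun a y => ∑ b, dX a * dX b * g y a b) a y) from rfl]
    rw [fderiv_fun_sum (fun a _ => hinner a)]
    simp only [ContinuousLinearMap.smul_apply, ContinuousLinearMap.sum_apply, smul_eq_mul]
    congr 1
    refine Finset.sum_congr rfl (fun a _ => ?_)
    rw [show (fun y => ∑ b, dX a * dX b * g y a b)
        = (fun y => ∑ b ∈ Finset.univ, (fun b y => dX a * dX b * g y a b) b y) from rfl]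
    rw [fderiv_fun_sum (fun b _ => (hdiff a b).const_mul _)]
    simp only [ContinuousLinearMap.sum_apply]
    refine Finset.sum_congr rfl (fun b _ => ?_)
    rw [fderiv_const_mul (hdiff a b)]
    simp [mul_comm]
  rw [hR]
  -- Now handle the LHS
  have hswap : ∀ m k, pd m (fun y => g y i k) x = pd m (fun y => g y k i) x := by
    intro m k
    have : (fun y => g y i k) = fun y => g y k i := funext fun y => hsym y i k
    rw [this]
  have expand : ∀ k m, dX m * dX k *
      ((pd k (fun y => g y m i) x + pd i (fun y => g y m k) x
        - pd m (fun y => g y i k) x) / 2)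
      = (2 : ℝ)⁻¹ * (dX m * dX k * pd k (fun y => g y m i) x)
        + (2 : ℝ)⁻¹ * (dX m * dX k * pd i (fun y => g y m k) x)
        - (2 : ℝ)⁻¹ * (dX m * dX k * pd m (fun y => g y k i) x) := by
    intro k m; rw [← hswap m k]; ring
  simp only [expand, Finset.sum_sub_distrib, Finset.sum_add_distrib]
  have hcancel : (∑ k, ∑ m, (2 : ℝ)⁻¹ * (dX m * dX k * pd k (fun y => g y m i) x))
      = ∑ k, ∑ m, (2 : ℝ)⁻¹ * (dX m * dX k * pd m (fun y => g y k i) x) := by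
    rw [Finset.sum_comm]
    refine Finset.sum_congr rfl (fun k _ => Finset.sum_congr rfl (fun m _ => ?_))
    ring_nf
  rw [hcancel, add_sub_cancel_left]
  simp only [Finset.mul_sum]
  rw [Finset.sum_comm]
end

section
/- Under a smooth change of coordinates X = X(x) with smooth inverse, if Γ^k_{ij} transforms as an affine connection and g_{ij} transforms as a covariant 2-tensor, and all mixed second partial derivatives ∂²x^m/∂X^i∂X^j commute with the relevant differentiations, then the quantity Γ̃^k_{ij} = dX^k dX^r g_{sr} Γ^s_{ij} (with dX^k = (∂X^k/∂x^α) dx^α) transforms as an affine connection if and only if the compatibility condition dx^α dx^β g_{mβ} (∂²x^m/∂X^i∂X^j)(∂X^k/∂x^α) = (∂²x^α/∂X^i∂X^j)(∂X^k/∂x^α) holds for all i, j, k. -/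
/-!
Write `w = g dx` for the displacement with its index lowered by `g`. Since `dX = J dx`,
`g' = Jinvᵀ g Jinv` and `Jinv J = 1`, contracting `dX^r g'_{sr}` with the upper index of any
quantity of the form `J^s_m T^m` gives `w_m T^m`. Applied to the affine law for `Γ'`, this turns
`dX^k dX^r g'_{sr} Γ'^s_{ij}` into the tensorial transform of `Γ̃` plus `dX^k w_m S^m_{ij}`. So `Γ̃`
transforms as a connection exactly when that term equals the inhomogeneous term `S^α_{ij} J^k_α`,
which is the compatibility condition.
-/

open Matrix

section Contraction

variable {ι R : Type*} [Fintype ι] [CommSemiring R]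

theorem Matrix.vecMul_mulVec_conj_of_mul_eq_one {κ : Type*} [Fintype κ] [DecidableEq κ]
    (A : Matrix ι κ R) (B : Matrix κ ι R) (G : Matrix κ κ R) (hBA : B * A = 1) (v : κ → R) :
    ((Bᵀ * G * B) *ᵥ (A *ᵥ v)) ᵥ* A = G *ᵥ v := by
  rw [mulVec_mulVec, Matrix.mul_assoc, hBA, Matrix.mul_one, ← vecMul_transpose, vecMul_vecMul,
    transpose_mul, transpose_transpose, Matrix.mul_assoc, hBA, Matrix.mul_one, vecMul_transpose]

theorem covariant_transform_eq_transpose_mul_mul {Jinv g g' : Matrix ι ι R}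
    (hg' : ∀ i j, g' i j = ∑ k, ∑ l, Jinv k i * Jinv l j * g k l) :
    g' = Jinvᵀ * g * Jinv := by
  ext i j
  simp only [hg', mul_apply, transpose_apply, Finset.sum_mul]
  rw [Finset.sum_comm]
  exact Finset.sum_congr rfl fun _ _ => Finset.sum_congr rfl fun _ _ => by ring

theorem connection_transform_eq_mulVec {J Jinv : Matrix ι ι R} {S Γ Γ' : ι → ι → ι → R}
    (hΓ' : ∀ k i j, Γ' k i j =
      (∑ m, ∑ a, ∑ b, Γ m a b * J k m * Jinv a i * Jinv b j) + ∑ m, S m i j * J k m)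
    (s i j : ι) :
    Γ' s i j = (J *ᵥ fun m => (∑ a, ∑ b, Γ m a b * Jinv a i * Jinv b j) + S m i j) s := by
  simp only [hΓ', mulVec, dotProduct, mul_add, Finset.sum_add_distrib, Finset.mul_sum]
  congr 1
  · exact Finset.sum_congr rfl fun _ _ => Finset.sum_congr rfl fun _ _ =>
      Finset.sum_congr rfl fun _ _ => by ring
  · exact Finset.sum_congr rfl fun _ _ => mul_comm _ _

theorem sum_sum_mul_mul_mul_eq_mul_dotProduct (G : Matrix ι ι R) (u c : ι → R) (k : ι) :
    ∑ r, ∑ s, u k * u r * G s r * c s = u k * ((G *ᵥ u) ⬝ᵥ c) := by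
  simp only [mulVec, dotProduct, Finset.mul_sum, Finset.sum_mul]
  rw [Finset.sum_comm]
  exact Finset.sum_congr rfl fun _ _ => Finset.sum_congr rfl fun _ _ => by ring

theorem sum_sum_mulVec_conj_mulVec_eq [DecidableEq ι] {J Jinv : Matrix ι ι R}
    (hJinvJ : Jinv * J = 1) (g : Matrix ι ι R) (dx T : ι → R) (k : ι) :
    ∑ r, ∑ s, (J *ᵥ dx) k * (J *ᵥ dx) r * (Jinvᵀ * g * Jinv) s r * (J *ᵥ T) s
      = (J *ᵥ dx) k * ((g *ᵥ dx) ⬝ᵥ T) := by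
  rw [sum_sum_mul_mul_mul_eq_mul_dotProduct, dotProduct_mulVec,
    vecMul_mulVec_conj_of_mul_eq_one J Jinv g hJinvJ]

theorem sum_sum_sum_lowered_tensor_transform (J Jinv g : Matrix ι ι R) (Γ : ι → ι → ι → R)
    (dx : ι → R) (k i j : ι) :
    ∑ m, ∑ a, ∑ b, (∑ β, ∑ s, dx m * dx β * g s β * Γ s a b) * J k m * Jinv a i * Jinv b j
      = (J *ᵥ dx) k * ((g *ᵥ dx) ⬝ᵥ fun s => ∑ a, ∑ b, Γ s a b * Jinv a i * Jinv b j) := by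
  simp only [mulVec, dotProduct]
  rw [Finset.sum_mul]
  refine Finset.sum_congr rfl fun m _ => ?_
  simp only [Finset.mul_sum, Finset.sum_mul]
  conv_lhs => enter [2, a, 2, b]; rw [Finset.sum_comm]
  rw [Finset.sum_comm_cycle]
  exact Finset.sum_congr rfl fun _ _ => Finset.sum_congr rfl fun _ _ =>
    Finset.sum_congr rfl fun _ _ => Finset.sum_congr rfl fun _ _ => by ring

theorem sum_sum_sum_lowered_mul_mulVec (J g : Matrix ι ι R) (dx c : ι → R) (k : ι) :
    ∑ α, ∑ β, ∑ m, dx α * dx β * g m β * c m * J k α = (J *ᵥ dx) k * ((g *ᵥ dx) ⬝ᵥ c) := by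
  simp only [mulVec, dotProduct]
  rw [Finset.sum_mul]
  refine Finset.sum_congr rfl fun α _ => ?_
  simp only [Finset.mul_sum, Finset.sum_mul]
  rw [Finset.sum_comm]
  exact Finset.sum_congr rfl fun _ _ => Finset.sum_congr rfl fun _ _ => by ring

theorem sum_sum_lowered_connection_transform [DecidableEq ι] {J Jinv g g' : Matrix ι ι R}
    {S Γ Γ' : ι → ι → ι → R} {dx dX : ι → R} (hJinvJ : Jinv * J = 1) (hdX : dX = J *ᵥ dx)
    (hg' : ∀ i j, g' i j = ∑ k, ∑ l, Jinv k i * Jinv l j * g k l)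
    (hΓ' : ∀ k i j, Γ' k i j =
      (∑ m, ∑ a, ∑ b, Γ m a b * J k m * Jinv a i * Jinv b j) + ∑ m, S m i j * J k m)
    (k i j : ι) :
    ∑ r, ∑ s, dX k * dX r * g' s r * Γ' s i j
      = (∑ m, ∑ a, ∑ b,
          (∑ β, ∑ s, dx m * dx β * g s β * Γ s a b) * J k m * Jinv a i * Jinv b j)
        + ∑ α, ∑ β, ∑ m, dx α * dx β * g m β * S m i j * J k α := by
  set w := g *ᵥ dx
  calc ∑ r, ∑ s, dX k * dX r * g' s r * Γ' s i j
      = dX k * (w ⬝ᵥ fun m => (∑ a, ∑ b, Γ m a b * Jinv a i * Jinv b j) + S m i j) := by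
        simp only [connection_transform_eq_mulVec hΓ' _ i j,
          covariant_transform_eq_transpose_mul_mul hg', hdX]
        exact sum_sum_mulVec_conj_mulVec_eq hJinvJ g dx _ k
    _ = dX k * (w ⬝ᵥ fun m => ∑ a, ∑ b, Γ m a b * Jinv a i * Jinv b j)
        + dX k * (w ⬝ᵥ fun m => S m i j) := by
        rw [← mul_add, ← dotProduct_add]
        rfl
    _ = _ := by
        rw [hdX, sum_sum_sum_lowered_tensor_transform J Jinv g Γ dx k i j,
          sum_sum_sum_lowered_mul_mulVec J g dx (fun m => S m i j) k]

end Contraction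

/-- `J k α = ∂X^k/∂x^α`, `Jinv m i = ∂x^m/∂X^i`, `S m i j = ∂²x^m/∂X^i∂X^j`. -/
theorem stmt6 {n : ℕ}
    (J Jinv : Fin n → Fin n → ℝ)
    (S : Fin n → Fin n → Fin n → ℝ)
    (Γ Γ' : Fin n → Fin n → Fin n → ℝ)
    (g g' : Fin n → Fin n → ℝ)
    (dx dX : Fin n → ℝ)
    (hJ : ∀ k i, (∑ m, J k m * Jinv m i) = if k = i then (1 : ℝ) else 0)
    (hdX : ∀ k, dX k = ∑ α, J k α * dx α)
    (hg' : ∀ i j, g' i j = ∑ k, ∑ l, Jinv k i * Jinv l j * g k l)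
    (hΓ' : ∀ k i j, Γ' k i j =
      (∑ m, ∑ a, ∑ b, Γ m a b * J k m * Jinv a i * Jinv b j) + ∑ m, S m i j * J k m) :
    ((∀ k i j, (∑ r, ∑ s, dX k * dX r * g' s r * Γ' s i j)
        = (∑ m, ∑ a, ∑ b,
            (∑ β, ∑ s, dx m * dx β * g s β * Γ s a b) * J k m * Jinv a i * Jinv b j)
          + ∑ m, S m i j * J k m)
      ↔ (∀ i j k, (∑ α, ∑ β, ∑ m, dx α * dx β * g m β * S m i j * J k α)
          = ∑ α, S α i j * J k α)) := by
  have hJinvJ : Matrix.of Jinv * Matrix.of J = 1 :=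
    mul_eq_one_comm.mp <| by ext k i; simpa [mul_apply, one_apply] using hJ k i
  simp only [add_right_inj,
    sum_sum_lowered_connection_transform (J := J) (Jinv := Jinv) hJinvJ (funext hdX) hg' hΓ']
  exact ⟨fun h i j k => h k i j, fun h k i j => h i j k⟩
end
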